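/- arXiv:1912.12454 — 2 statements merged into one kernel-verified Lean document; each statement's English description precedes it below -/
import Mathlib

section
/- Let U ⊆ X be open convex and f ∈ C^{1u}(U,Y). If f is weakly p-sequentially continuous, then for every U-bounded weakly p-Cauchy sequence (x_n) in U and every bounded weakly p-Cauchy sequence (h_n) in X, the sequence (f′(x_n)(h_n))_n is norm convergent in Y. -/
open Filter Topology Metric Set
open scoped ENNReal NNReal

section Defs

variable {X Y : Type*} [NormedAddCommGroup X] [NormedSpace ℝ X]
  [NormedAddCommGroup Y] [NormedSpace ℝ Y]

/-- A sequence `(x n)` in `X` is weakly `p`-summable if `(f (x n))ₙ ∈ ℓ_p` for every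
continuous linear functional `f` (for `p = ∞`, this means `(f (x n))ₙ ∈ c₀`). -/
def WeaklyLpSummable (p : ℝ≥0∞) (x : ℕ → X) : Prop :=
  ∀ f : X →L[ℝ] ℝ,
    if p = ⊤ then Filter.Tendsto (fun n => f (x n)) Filter.atTop (nhds 0)
    else Memℓp (fun n => f (x n)) p

/-- A sequence is weakly `p`-Cauchy if all difference sequences along pairs of strictly
monotone index sequences are weakly `p`-summable. -/
def WeaklyLpCauchy (p : ℝ≥0∞) (x : ℕ → X) : Prop :=
  ∀ m k : ℕ → ℕ, StrictMono m → StrictMono k →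
    WeaklyLpSummable p (fun i => x (m i) - x (k i))

/-- `(x n)` is weakly `p`-convergent to `x₀` if `(x n - x₀)` is weakly `p`-summable. -/
def WeaklyLpConvergentTo (p : ℝ≥0∞) (x : ℕ → X) (x₀ : X) : Prop :=
  WeaklyLpSummable p (fun n => x n - x₀)

/-- A set `K ⊆ L(X,Y)` is uniformly `p`-convergent if `lim_n sup_{T ∈ K} ‖T (x n)‖ = 0`
for every weakly `p`-summable sequence `(x n)`. -/
def UniformlyPConvergent (p : ℝ≥0∞) (K : Set (X →L[ℝ] Y)) : Prop :=
  ∀ x : ℕ → X, WeaklyLpSummable p x →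
    ∀ ε > 0, ∃ N : ℕ, ∀ n ≥ N, ∀ T ∈ K, ‖T (x n)‖ < ε

/-- `B` is `U`-bounded: contained in `U`, bounded, and at positive distance from `∂U`. -/
def UBounded (U B : Set X) : Prop :=
  B ⊆ U ∧ Bornology.IsBounded B ∧ ∃ r > 0, ∀ b ∈ B, Metric.ball b r ⊆ U

/-- A sequence is `U`-bounded if its range is a `U`-bounded set. -/
def UBoundedSeq (U : Set X) (x : ℕ → X) : Prop :=
  UBounded U (Set.range x)

/-- `f ∈ C^{1u}(U,Y)`: `f` is differentiable on `U` with derivative `f'` which is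
uniformly continuous on `U`-bounded subsets of `U`. -/
def C1u (U : Set X) (f : X → Y) (f' : X → X →L[ℝ] Y) : Prop :=
  (∀ x ∈ U, HasFDerivAt f (f' x) x) ∧
  ∀ B : Set X, UBounded U B → UniformContinuousOn f' B

/-- `T` is a `p`-convergent operator: it maps weakly `p`-summable sequences to norm-null
sequences. -/
def PConvergentOp (p : ℝ≥0∞) (T : X →L[ℝ] Y) : Prop :=
  ∀ x : ℕ → X, WeaklyLpSummable p x →
    Filter.Tendsto (fun n => ‖T (x n)‖) Filter.atTop (nhds 0)

/-- `f` is weakly `p`-sequentially continuous on `U`: it maps `U`-bounded weakly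
`p`-Cauchy sequences to norm convergent sequences. -/
def WeaklyPSeqCont (p : ℝ≥0∞) (U : Set X) (f : X → Y) : Prop :=
  ∀ x : ℕ → X, UBoundedSeq U x → WeaklyLpCauchy p x →
    ∃ l : Y, Filter.Tendsto (fun n => f (x n)) Filter.atTop (nhds l)

/-- `K` is weakly `p`-precompact: every sequence in `K` has a weakly `p`-Cauchy
subsequence. -/
def WeaklyPPrecompact (p : ℝ≥0∞) (K : Set X) : Prop :=
  ∀ x : ℕ → X, (∀ n, x n ∈ K) →
    ∃ m : ℕ → ℕ, StrictMono m ∧ WeaklyLpCauchy p (fun i => x (m i))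

end Defs


section Helpers

variable {X : Type*} [NormedAddCommGroup X] [NormedSpace ℝ X] {p : ℝ≥0∞}

lemma WeaklyLpSummable.add'' {x y : ℕ → X} (hx : WeaklyLpSummable p x)
    (hy : WeaklyLpSummable p y) : WeaklyLpSummable p (fun n => x n + y n) := by
  intro f
  have hx' := hx f
  have hy' := hy f
  by_cases hp : p = ⊤
  · simp only [hp, if_true] at *
    simpa [map_add] using hx'.add hy'
  · simp only [hp, if_false] at *
    have h := hx'.add hy'
    convert h using 1
    funext n
    simp [map_add]

lemma WeaklyLpSummable.smul'' {x : ℕ → X} (t : ℝ) (hx : WeaklyLpSummable p x) :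
    WeaklyLpSummable p (fun n => t • x n) := by
  intro f
  have hx' := hx f
  by_cases hp : p = ⊤
  · simp only [hp, if_true] at *
    simpa [map_smul, smul_eq_mul] using hx'.const_mul t
  · simp only [hp, if_false] at *
    have h := hx'.const_smul t
    convert h using 1
    funext n
    simp [map_smul, smul_eq_mul]

lemma WeaklyLpCauchy.add_smul'' {x h : ℕ → X} (t : ℝ) (hx : WeaklyLpCauchy p x)
    (hh : WeaklyLpCauchy p h) : WeaklyLpCauchy p (fun n => x n + t • h n) := by
  intro m k hm hk
  have H := (hx m k hm hk).add'' ((hh m k hm hk).smul'' t)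
  convert H using 1
  funext i
  simp only [smul_sub]
  abel

end Helpers

/-- If `f ∈ C^{1u}(U,Y)` is weakly `p`-sequentially continuous, then for every
`U`-bounded weakly `p`-Cauchy `(x n)` and bounded weakly `p`-Cauchy `(h n)`, the
sequence `(f' (x n) (h n))` is norm convergent. -/
theorem weaklyPSeqCont_deriv_pairing_convergent
    {X Y : Type*} [NormedAddCommGroup X] [NormedSpace ℝ X] [CompleteSpace X]
    [NormedAddCommGroup Y] [NormedSpace ℝ Y] [CompleteSpace Y]
    (p : ℝ≥0∞) (hp : 1 ≤ p)
    (U : Set X) (hU : IsOpen U) (hUc : Convex ℝ U)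
    (f : X → Y) (f' : X → X →L[ℝ] Y) (hf : C1u U f f')
    (hwsc : WeaklyPSeqCont p U f)
    (x : ℕ → X) (hx : UBoundedSeq U x) (hxc : WeaklyLpCauchy p x)
    (h : ℕ → X) (hb : Bornology.IsBounded (Set.range h)) (hc : WeaklyLpCauchy p h) :
    ∃ l : Y, Filter.Tendsto (fun n => f' (x n) (h n)) Filter.atTop (nhds l) := by
  obtain ⟨hxU, hxb, r, hr, hrU⟩ := hx
  obtain ⟨Mx, hMx⟩ := isBounded_iff_forall_norm_le.1 hxb
  obtain ⟨M0, hM0⟩ := isBounded_iff_forall_norm_le.1 hb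
  set M : ℝ := max M0 1 with hMdef
  have hM1 : (0:ℝ) < M := lt_of_lt_of_le one_pos (le_max_right _ _)
  have hhM : ∀ n, ‖h n‖ ≤ M := fun n =>
    le_trans (hM0 _ (Set.mem_range_self n)) (le_max_left _ _)
  set t₀ : ℝ := r / (2 * M) with ht₀def
  have ht₀ : 0 < t₀ := div_pos hr (by positivity)
  have ht₀M : t₀ * M = r / 2 := by
    rw [ht₀def]; field_simp
  set B : Set X := {y | ∃ n, ∃ s : ℝ, s ∈ Set.Icc (0:ℝ) t₀ ∧ y = x n + s • h n} with hBdef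
  have hxB : ∀ n, x n ∈ B := fun n => ⟨n, 0, ⟨le_refl _, le_of_lt ht₀⟩, by simp⟩
  have hsmall : ∀ n, ∀ s : ℝ, s ∈ Set.Icc (0:ℝ) t₀ → ‖s • h n‖ ≤ r / 2 := by
    intro n s ⟨hs0, hs1⟩
    rw [norm_smul, Real.norm_eq_abs, abs_of_nonneg hs0, ← ht₀M]
    exact mul_le_mul hs1 (hhM n) (norm_nonneg _) (le_of_lt ht₀)
  have hBball : ∀ b ∈ B, Metric.ball b (r/2) ⊆ U := by
    rintro b ⟨n, s, hs, rfl⟩ z hz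
    apply hrU (x n) (Set.mem_range_self n)
    rw [Metric.mem_ball] at hz ⊢
    calc dist z (x n) ≤ dist z (x n + s • h n) + dist (x n + s • h n) (x n) :=
          dist_triangle _ _ _
      _ < r/2 + r/2 := by
          refine add_lt_add_of_lt_of_le hz ?_
          simp only [dist_eq_norm, add_sub_cancel_left]
          exact hsmall n s hs
      _ = r := by ring
  have hBsubU : B ⊆ U := by
    intro b hb'
    exact hBball b hb' (Metric.mem_ball_self (by positivity))
  have hBbdd : Bornology.IsBounded B := by
    rw [isBounded_iff_forall_norm_le]
    refine ⟨Mx + r/2, ?_⟩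
    rintro z ⟨n, s, hs, rfl⟩
    calc ‖x n + s • h n‖ ≤ ‖x n‖ + ‖s • h n‖ := norm_add_le _ _
      _ ≤ Mx + r/2 := add_le_add (hMx _ (Set.mem_range_self n)) (hsmall n s hs)
  have hBU : UBounded U B := ⟨hBsubU, hBbdd, r/2, by positivity, hBball⟩
  have hucf' := hf.2 B hBU
  have hcs : CauchySeq (fun n => f' (x n) (h n)) := by
    rw [Metric.cauchySeq_iff]
    intro ε hε
    obtain ⟨δ, hδ, hδ'⟩ := Metric.uniformContinuousOn_iff.1 hucf' (ε/(4*M)) (by positivity)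
    set t : ℝ := min t₀ (δ/(2*M)) with htdef
    have ht : 0 < t := lt_min ht₀ (by positivity)
    have htt₀ : t ≤ t₀ := min_le_left _ _
    have htδ : t * M < δ := by
      have h' : t ≤ δ/(2*M) := min_le_right _ _
      calc t * M ≤ (δ/(2*M)) * M := mul_le_mul_of_nonneg_right h' (le_of_lt hM1)
        _ = δ/2 := by field_simp
        _ < δ := by linarith
    set y : ℕ → X := fun n => x n + t • h n with hydef
    have hyB : ∀ n, ∀ s : ℝ, s ∈ Set.Icc (0:ℝ) t → x n + s • h n ∈ B := by
      intro n s hs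
      exact ⟨n, s, ⟨hs.1, le_trans hs.2 htt₀⟩, rfl⟩
    have hynB : ∀ n, y n ∈ B := fun n => hyB n t ⟨le_of_lt ht, le_refl t⟩
    have key : ∀ n, ‖f' (x n) (h n) - t⁻¹ • (f (y n) - f (x n))‖ ≤ ε/4 := by
      intro n
      have hseg : segment ℝ (x n) (y n) ⊆ B := by
        rw [segment_eq_image']
        rintro z ⟨θ, ⟨hθ0, hθ1⟩, rfl⟩
        have he : x n + θ • (y n - x n) = x n + (θ * t) • h n := by
          simp [hydef, smul_smul]
        show x n + θ • (y n - x n) ∈ B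
        rw [he]
        apply hyB
        refine ⟨by positivity, ?_⟩
        calc θ * t ≤ 1 * t := mul_le_mul_of_nonneg_right hθ1 (le_of_lt ht)
          _ = t := one_mul t
      have hder : ∀ z ∈ segment ℝ (x n) (y n),
          HasFDerivWithinAt f (f' z) (segment ℝ (x n) (y n)) z := fun z hz =>
        (hf.1 z (hBsubU (hseg hz))).hasFDerivWithinAt
      have hnorm : ‖t • h n‖ ≤ t * M := by
        rw [norm_smul, Real.norm_eq_abs, abs_of_nonneg (le_of_lt ht)]
        exact mul_le_mul_of_nonneg_left (hhM n) (le_of_lt ht)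
      have hbound : ∀ z ∈ segment ℝ (x n) (y n), ‖f' z - f' (x n)‖ ≤ ε/(4*M) := by
        intro z hz
        have hzB : z ∈ B := hseg hz
        have hdist : dist z (x n) < δ := by
          rw [segment_eq_image'] at hz
          obtain ⟨θ, ⟨hθ0, hθ1⟩, rfl⟩ := hz
          show dist (x n + θ • (y n - x n)) (x n) < δ
          rw [dist_eq_norm]
          simp only [add_sub_cancel_left]
          calc ‖θ • (y n - x n)‖ = θ * ‖y n - x n‖ := by
                rw [norm_smul, Real.norm_eq_abs, abs_of_nonneg hθ0]
            _ ≤ 1 * (t * M) := by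
                refine mul_le_mul hθ1 ?_ (norm_nonneg _) zero_le_one
                simpa [hydef] using hnorm
            _ = t * M := one_mul _
            _ < δ := htδ
        have hlt := hδ' z hzB (x n) (hxB n) hdist
        rw [dist_eq_norm] at hlt
        exact le_of_lt hlt
      have hmvt := (convex_segment (x n) (y n)).norm_image_sub_le_of_norm_hasFDerivWithin_le'
        hder hbound (left_mem_segment ℝ (x n) (y n)) (right_mem_segment ℝ (x n) (y n))
      have hyx : y n - x n = t • h n := by simp [hydef]
      rw [hyx] at hmvt
      have h1 : ‖f (y n) - f (x n) - (f' (x n)) (t • h n)‖ ≤ ε/(4*M) * (t * M) :=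
        le_trans hmvt (mul_le_mul_of_nonneg_left hnorm (by positivity))
      have h2 : ε/(4*M) * (t * M) = t * (ε/4) := by field_simp
      rw [h2] at h1
      have h3 : f' (x n) (h n) - t⁻¹ • (f (y n) - f (x n))
          = -(t⁻¹ • (f (y n) - f (x n) - (f' (x n)) (t • h n))) := by
        rw [map_smul]
        simp only [smul_sub, smul_smul, inv_mul_cancel₀ (ne_of_gt ht), one_smul]
        abel
      rw [h3, norm_neg, norm_smul, Real.norm_eq_abs, abs_of_nonneg (le_of_lt (inv_pos.2 ht))]
      calc t⁻¹ * ‖f (y n) - f (x n) - (f' (x n)) (t • h n)‖ ≤ t⁻¹ * (t * (ε/4)) :=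
            mul_le_mul_of_nonneg_left h1 (le_of_lt (inv_pos.2 ht))
        _ = ε/4 := by field_simp
    have hyUB : UBoundedSeq U y := by
      refine ⟨?_, ?_, r/2, by positivity, ?_⟩
      · rintro z ⟨n, rfl⟩
        exact hBsubU (hynB n)
      · apply hBbdd.subset
        rintro z ⟨n, rfl⟩
        exact hynB n
      · rintro z ⟨n, rfl⟩
        exact hBball _ (hynB n)
    have hyc : WeaklyLpCauchy p y := hxc.add_smul'' t hc
    obtain ⟨L1, hL1⟩ := hwsc y hyUB hyc
    obtain ⟨L0, hL0⟩ := hwsc x ⟨hxU, hxb, r, hr, hrU⟩ hxc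
    have hg : Filter.Tendsto (fun n => t⁻¹ • (f (y n) - f (x n))) Filter.atTop
        (nhds (t⁻¹ • (L1 - L0))) := (hL1.sub hL0).const_smul t⁻¹
    have hgc : CauchySeq (fun n => t⁻¹ • (f (y n) - f (x n))) := hg.cauchySeq
    obtain ⟨N, hN⟩ := Metric.cauchySeq_iff.1 hgc (ε/4) (by positivity)
    refine ⟨N, fun m hm n hn => ?_⟩
    have hd1 := key m
    have hd2 := key n
    have hd3 := hN m hm n hn
    calc dist (f' (x m) (h m)) (f' (x n) (h n))
        ≤ dist (f' (x m) (h m)) (t⁻¹ • (f (y m) - f (x m)))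
          + dist (t⁻¹ • (f (y m) - f (x m))) (t⁻¹ • (f (y n) - f (x n)))
          + dist (t⁻¹ • (f (y n) - f (x n))) (f' (x n) (h n)) := dist_triangle4 _ _ _ _
      _ ≤ ε/4 + ε/4 + ε/4 := by
          refine add_le_add (add_le_add ?_ (le_of_lt hd3)) ?_
          · rw [dist_eq_norm]
            exact hd1
          · rw [dist_eq_norm']
            exact hd2
      _ < ε := by linarith
  exact cauchySeq_tendsto_of_complete hcs
end

section
/- Let U ⊆ X be open convex and f ∈ C^{1u}(U,Y). If f is weakly p-sequentially continuous, then f′(x) is a p-convergent operator for every x ∈ U, i.e., f′(U) ⊆ C_p(X,Y). -/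
/-! Fix `x ∈ U` and a weakly `p`-summable sequence `(vₙ)`; by the uniform boundedness principle
it is norm bounded. For small `t > 0` the interleaved sequence `x + t v₀, x, x + t v₁, x, …` is
`U`-bounded and weakly `p`-Cauchy, so weak `p`-sequential continuity forces
`f (x + t vₙ) → f x`. As `f'` is continuous at `x`, the mean value inequality gives
`t ‖f' x vₙ‖ ≤ ‖f (x + t vₙ) - f x‖ + η t sup ‖vₘ‖` with `η → 0` as `t → 0`,
whence `f' x vₙ → 0`. -/

open Filter Topology Metric Set
open scoped ENNReal NNReal

open Function Bornology

section Reindex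

variable {α β E : Type*} [NormedAddCommGroup E] {p : ℝ≥0∞} {f : α → E} {g : β → α}

theorem Memℓp.comp_injective (hf : Memℓp f p) (hg : Injective g) : Memℓp (f ∘ g) p := by
  rcases p.trichotomy with rfl | rfl | hp
  · exact memℓp_zero ((memℓp_zero_iff.1 hf).preimage hg.injOn)
  · exact memℓp_infty (hf.bddAbove.mono (range_comp_subset_range g fun a => ‖f a‖))
  · exact memℓp_gen ((hf.summable hp).comp_injective hg)

theorem Function.apply_extend_zero {γ δ : Type*} [Zero γ] [Zero δ] (F : γ → δ)
    (hF : F 0 = 0) (f : β → γ) : (fun a => F (extend g f 0 a)) = extend g (fun b => F (f b)) 0 := by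
  ext a
  rw [apply_extend F]
  congr
  ext
  exact hF

theorem Memℓp.extend_zero {f : β → E} (hf : Memℓp f p) (hg : Injective g) :
    Memℓp (extend g f 0) p := by
  rcases p.trichotomy with rfl | rfl | hp
  · exact memℓp_zero (((memℓp_zero_iff.1 hf).image g).subset support_extend_zero_subset)
  · rw [memℓp_infty_iff, apply_extend_zero _ norm_zero]
    have hzero : (0 : α → ℝ) '' (range g)ᶜ ⊆ {0} := image_subset_iff.2 fun _ _ => rfl
    exact (hf.bddAbove.union (bddAbove_singleton.mono hzero)).mono (range_extend_subset _ _ _)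
  · rw [memℓp_gen_iff hp, apply_extend_zero (‖·‖ ^ p.toReal) (by simp [Real.zero_rpow hp.ne']),
      summable_extend_zero hg]
    exact hf.summable hp

theorem Filter.Tendsto.extend_zero_cofinite {f : β → E} (hf : Tendsto f cofinite (𝓝 0))
    (hg : Injective g) : Tendsto (extend g f 0) cofinite (𝓝 0) := by
  intro V hV
  refine ((hf hV).image g).subset ?_
  intro a ha
  by_cases hga : ∃ b, g b = a
  · obtain ⟨b, rfl⟩ := hga
    exact ⟨b, by simpa [hg.extend_apply] using ha, rfl⟩
  · exact absurd (by simpa [extend_apply' _ _ _ hga] using mem_of_mem_nhds hV) ha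

end Reindex

theorem isBounded_of_forall_isBounded_image_dual {𝕜 E : Type*} [RCLike 𝕜]
    [NormedAddCommGroup E] [NormedSpace 𝕜 E] {s : Set E}
    (h : ∀ g : StrongDual 𝕜 E, IsBounded (g '' s)) : IsBounded s := by
  have hpt (g : StrongDual 𝕜 E) :
      ∃ C, ∀ x : s, ‖NormedSpace.inclusionInDoubleDual 𝕜 E x g‖ ≤ C := by
    obtain ⟨C, hC⟩ := (h g).exists_norm_le
    exact ⟨C, fun x => hC _ (mem_image_of_mem g x.2)⟩
  obtain ⟨C, hC⟩ := banach_steinhaus hpt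
  refine isBounded_iff_forall_norm_le.2 ⟨C, fun x hx => ?_⟩
  rw [← (NormedSpace.inclusionInDoubleDualLi 𝕜).norm_map x]
  exact hC ⟨x, hx⟩

namespace WeaklyLpSummable

variable {X : Type*} [NormedAddCommGroup X] [NormedSpace ℝ X] {p : ℝ≥0∞} {x y : ℕ → X}

theorem sub (hx : WeaklyLpSummable p x) (hy : WeaklyLpSummable p y) :
    WeaklyLpSummable p fun n => x n - y n := by
  intro g
  have hxg := hx g
  have hyg := hy g
  split_ifs at hxg hyg ⊢
  · simpa using hxg.sub hyg
  · simpa [Pi.sub_def] using hxg.sub hyg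

theorem const_smul (hx : WeaklyLpSummable p x) (c : ℝ) :
    WeaklyLpSummable p fun n => c • x n := by
  intro g
  have hxg := hx g
  split_ifs at hxg ⊢
  · simpa using hxg.const_mul c
  · simpa using hxg.const_mul c

theorem comp_injective (hx : WeaklyLpSummable p x) {m : ℕ → ℕ} (hm : Injective m) :
    WeaklyLpSummable p (x ∘ m) := by
  intro g
  have hxg := hx g
  split_ifs at hxg ⊢
  · rw [← Nat.cofinite_eq_atTop] at hxg ⊢
    exact hxg.comp hm.tendsto_cofinite
  · exact hxg.comp_injective hm

theorem extend_zero (hx : WeaklyLpSummable p x) {m : ℕ → ℕ} (hm : Injective m) :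
    WeaklyLpSummable p (extend m x 0) := by
  intro g
  have hxg := hx g
  rw [apply_extend_zero g (map_zero g)]
  split_ifs at hxg ⊢
  · rw [← Nat.cofinite_eq_atTop] at hxg ⊢
    exact hxg.extend_zero_cofinite hm
  · exact hxg.extend_zero hm

theorem weaklyLpCauchy_const_add (hx : WeaklyLpSummable p x) (x₀ : X) :
    WeaklyLpCauchy p fun n => x₀ + x n := fun m k hm hk => by
  simpa using (hx.comp_injective hm.injective).sub (hx.comp_injective hk.injective)

theorem isBounded_range (hx : WeaklyLpSummable p x) : IsBounded (range x) := by
  refine isBounded_of_forall_isBounded_image_dual (𝕜 := ℝ) fun g => ?_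
  rw [← range_comp]
  have hxg := hx g
  split_ifs at hxg
  · exact Metric.isBounded_range_of_tendsto _ hxg
  · obtain ⟨C, hC⟩ := (hxg.of_exponent_ge le_top).bddAbove
    exact isBounded_iff_forall_norm_le.2 ⟨C, fun _ ⟨n, hn⟩ => hn ▸ hC ⟨n, rfl⟩⟩

end WeaklyLpSummable

section UBounded

variable {X : Type*} [NormedAddCommGroup X] {U B C : Set X}

theorem UBounded.mono (hB : UBounded U B) (hCB : C ⊆ B) : UBounded U C := by
  obtain ⟨hBU, hBb, r, hr, hball⟩ := hB
  exact ⟨hCB.trans hBU, hBb.subset hCB, r, hr, fun b hb => hball b (hCB hb)⟩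

theorem IsOpen.exists_uBounded_closedBall (hU : IsOpen U) {x : X} (hx : x ∈ U) :
    ∃ r > 0, UBounded U (closedBall x r) := by
  obtain ⟨R, hR, hRU⟩ := Metric.isOpen_iff.1 hU x hx
  refine ⟨R / 2, by positivity, (closedBall_subset_ball (by linarith)).trans hRU,
    isBounded_closedBall, R / 2, by positivity, fun b hb => ?_⟩
  exact (ball_subset_ball' (by linarith [mem_closedBall.1 hb])).trans hRU

end UBounded

theorem WeaklyPSeqCont.tendsto_add {X Y : Type*} [NormedAddCommGroup X] [NormedSpace ℝ X]
    [NormedAddCommGroup Y] [NormedSpace ℝ Y] {p : ℝ≥0∞} {U B : Set X} {f : X → Y} {x₀ : X}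
    {v : ℕ → X} (hf : WeaklyPSeqCont p U f) (hB : UBounded U B) (hx₀ : x₀ ∈ B)
    (hv : WeaklyLpSummable p v) (hvB : ∀ n, x₀ + v n ∈ B) :
    Tendsto (fun n => f (x₀ + v n)) atTop (𝓝 (f x₀)) := by
  have hdouble : Injective (2 * · : ℕ → ℕ) := mul_right_injective₀ two_ne_zero
  -- Interleave `x₀ + v n` with `x₀`; the odd terms force the limit to be `f x₀`.
  set z : ℕ → X := fun j => x₀ + extend (2 * ·) v 0 j
  have hz_even (n : ℕ) : z (2 * n) = x₀ + v n := by simp [z, hdouble.extend_apply]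
  have hz_odd (n : ℕ) : z (2 * n + 1) = x₀ := by
    simp only [z]
    rw [extend_apply' _ _ _ fun ⟨k, hk⟩ => by omega, Pi.zero_apply, add_zero]
  have hzB : range z ⊆ B := by
    rintro _ ⟨j, rfl⟩
    obtain ⟨n, rfl | rfl⟩ := j.even_or_odd'
    exacts [hz_even n ▸ hvB n, hz_odd n ▸ hx₀]
  obtain ⟨l, hl⟩ := hf z (hB.mono hzB) ((hv.extend_zero hdouble).weaklyLpCauchy_const_add x₀)
  have hodd : Injective (2 * · + 1 : ℕ → ℕ) := fun a b h => by simpa using h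
  have hl_eq : l = f x₀ :=
    tendsto_nhds_unique (by simpa only [comp_def, hz_odd] using hl.comp hodd.nat_tendsto_atTop)
      tendsto_const_nhds
  simpa only [comp_def, hz_even, hl_eq] using hl.comp hdouble.nat_tendsto_atTop

section Calculus

variable {E F : Type*} [NormedAddCommGroup E] [NormedSpace ℝ E] [NormedAddCommGroup F]
  [NormedSpace ℝ F] {f : E → F} {f' : E → E →L[ℝ] F} {x : E}

theorem norm_apply_le_of_norm_fderiv_sub_le {ρ η : ℝ} {v : E}
    (hf : ∀ y ∈ ball x ρ, HasFDerivAt f (f' y) y) (hf' : ∀ y ∈ ball x ρ, ‖f' y - f' x‖ ≤ η)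
    (hv : ‖v‖ < ρ) : ‖f' x v‖ ≤ ‖f (x + v) - f x‖ + η * ‖v‖ := by
  have hmvt := (convex_ball x ρ).norm_image_sub_le_of_norm_hasFDerivWithin_le'
    (fun y hy => (hf y hy).hasFDerivWithinAt) hf' (mem_ball_self ((norm_nonneg v).trans_lt hv))
    (by rwa [mem_ball, dist_eq_norm, add_sub_cancel_left])
  rw [add_sub_cancel_left] at hmvt
  calc ‖f' x v‖ = ‖(f (x + v) - f x) - (f (x + v) - f x - f' x v)‖ := by rw [sub_sub_cancel]
    _ ≤ ‖f (x + v) - f x‖ + ‖f (x + v) - f x - f' x v‖ := norm_sub_le _ _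
    _ ≤ ‖f (x + v) - f x‖ + η * ‖v‖ := by gcongr

theorem eventually_forall_norm_smul_lt {ι : Type*} {v : ι → E} (hv : IsBounded (range v))
    {ρ : ℝ} (hρ : 0 < ρ) : ∀ᶠ t in 𝓝 (0 : ℝ), ∀ i, ‖t • v i‖ < ρ := by
  obtain ⟨M, hM0, hM⟩ := hv.exists_pos_norm_le
  filter_upwards [ball_mem_nhds (0 : ℝ) (div_pos hρ hM0)] with t ht i
  rw [mem_ball_zero_iff] at ht
  calc ‖t • v i‖ = ‖t‖ * ‖v i‖ := norm_smul t (v i)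
    _ ≤ ‖t‖ * M := by gcongr; exact hM _ ⟨i, rfl⟩
    _ < ρ / M * M := by gcongr
    _ = ρ := div_mul_cancel₀ ρ hM0.ne'

theorem tendsto_fderiv_apply_of_tendsto_add_smul {v : ℕ → E}
    (hder : ∀ᶠ y in 𝓝 x, HasFDerivAt f (f' y) y) (hcont : ContinuousAt f' x)
    (hv : IsBounded (range v))
    (h : ∀ᶠ t in 𝓝[>] (0 : ℝ), Tendsto (fun n => f (x + t • v n)) atTop (𝓝 (f x))) :
    Tendsto (fun n => f' x (v n)) atTop (𝓝 0) := by
  obtain ⟨M, hM0, hM⟩ := hv.exists_pos_norm_le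
  refine NormedAddGroup.tendsto_nhds_zero.2 fun ε hε => ?_
  have hclose : ∀ᶠ y in 𝓝 x, ‖f' y - f' x‖ ≤ ε / (2 * M) := by
    simpa [dist_eq_norm] using hcont.eventually (closedBall_mem_nhds _ (by positivity))
  obtain ⟨ρ, hρ, hball⟩ := Metric.eventually_nhds_iff_ball.1 (hder.and hclose)
  obtain ⟨t, ⟨hlim, hsmall⟩, ht⟩ := ((h.and (nhdsWithin_le_nhds
    (eventually_forall_norm_smul_lt hv hρ))).and self_mem_nhdsWithin).exists
  filter_upwards [hlim.eventually (ball_mem_nhds _ (by positivity : 0 < t * ε / 2))] with n hn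
  rw [dist_eq_norm] at hn
  have hmvt := norm_apply_le_of_norm_fderiv_sub_le (fun y hy => (hball y hy).1)
    (fun y hy => (hball y hy).2) (hsmall n)
  have htv : ‖t • v n‖ ≤ t * M := by
    rw [norm_smul, Real.norm_of_nonneg ht.le]
    exact mul_le_mul_of_nonneg_left (hM _ ⟨n, rfl⟩) ht.le
  refine lt_of_mul_lt_mul_left ?_ ht.le
  calc t * ‖f' x (v n)‖ = ‖f' x (t • v n)‖ := by
        rw [map_smul, norm_smul, Real.norm_of_nonneg ht.le]
    _ ≤ ‖f (x + t • v n) - f x‖ + ε / (2 * M) * ‖t • v n‖ := hmvt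
    _ < t * ε / 2 + ε / (2 * M) * (t * M) := add_lt_add_of_lt_of_le hn (by gcongr)
    _ = t * ε := by field_simp; ring

end Calculus

theorem weaklyPSeqCont_deriv_pConvergent_general
    {X Y : Type*} [NormedAddCommGroup X] [NormedSpace ℝ X]
    [NormedAddCommGroup Y] [NormedSpace ℝ Y]
    (p : ℝ≥0∞)
    (U : Set X) (hU : IsOpen U)
    (f : X → Y) (f' : X → X →L[ℝ] Y) (hf : C1u U f f')
    (hwsc : WeaklyPSeqCont p U f) :
    ∀ x ∈ U, PConvergentOp p (f' x) := by
  intro x hx v hv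
  obtain ⟨r, hr, hB⟩ := hU.exists_uBounded_closedBall hx
  have hder : ∀ᶠ y in 𝓝 x, HasFDerivAt f (f' y) y := eventually_of_mem (hU.mem_nhds hx) hf.1
  have hcont : ContinuousAt f' x :=
    (hf.2 _ hB).continuousOn.continuousAt (closedBall_mem_nhds x hr)
  have hsmall : ∀ᶠ t in 𝓝[>] (0 : ℝ), ∀ n, x + t • v n ∈ closedBall x r :=
    nhdsWithin_le_nhds <| (eventually_forall_norm_smul_lt hv.isBounded_range hr).mono
      fun t ht n => by simpa [dist_eq_norm] using (ht n).le
  have hlim := hsmall.mono fun t ht =>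
    hwsc.tendsto_add hB (mem_closedBall_self hr.le) (hv.const_smul t) ht
  simpa using (tendsto_fderiv_apply_of_tendsto_add_smul hder hcont hv.isBounded_range hlim).norm

/-- If `f ∈ C^{1u}(U,Y)` is weakly `p`-sequentially continuous, then `f'(x)` is a
`p`-convergent operator for every `x ∈ U`. -/
theorem weaklyPSeqCont_deriv_pConvergent
    {X Y : Type*} [NormedAddCommGroup X] [NormedSpace ℝ X] [CompleteSpace X]
    [NormedAddCommGroup Y] [NormedSpace ℝ Y] [CompleteSpace Y]
    (p : ℝ≥0∞) (hp : 1 ≤ p)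
    (U : Set X) (hU : IsOpen U) (hUc : Convex ℝ U)
    (f : X → Y) (f' : X → X →L[ℝ] Y) (hf : C1u U f f')
    (hwsc : WeaklyPSeqCont p U f) :
    ∀ x ∈ U, PConvergentOp p (f' x) :=
  weaklyPSeqCont_deriv_pConvergent_general p U hU f f' hf hwsc
end
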